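/- arXiv:2108.03930 — 4 statements merged into one kernel-verified Lean document; each statement's English description precedes it below -/
import Mathlib

section
/- Let Ω ⊂ ℝ^d (d ≥ 1) be a bounded Lebesgue-measurable set with |Ω| > 0, equipped with Lebesgue measure. Let ρ_n, ρ : Ω → ℝ be measurable with 0 ≤ ρ_n ≤ 1 a.e. and 0 ≤ ρ ≤ 1 a.e. in Ω, and suppose ρ_n converges weakly-* to ρ in L^∞(Ω), i.e. ∫_Ω ρ_n φ dx → ∫_Ω ρ φ dx for every φ ∈ L¹(Ω). Let Ω_b ⊆ Ω be measurable with |Ω_b| > 0 such that ρ(x) ∈ {0,1} for a.e. x ∈ Ω_b. Then for every s ∈ [1,∞), ∫_{Ω_b} |ρ_n − ρ|^s dx → 0 as n → ∞, i.e. ρ_n → ρ strongly in L^s(Ω_b) for all s ∈ [1,∞). -/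
open MeasureTheory Filter

/-- If `ρ_n` are `[0,1]`-valued a.e., converge weakly-* in `L^∞(Ω)` to a `[0,1]`-valued
function `ρ`, and `ρ ∈ {0,1}` a.e. on a measurable subset `Ω_b ⊆ Ω` of positive measure,
then `ρ_n → ρ` strongly in `L^s(Ω_b)` for every `s ∈ [1,∞)`. -/
theorem weakStar_to_strong_on_binary_set
    {d : ℕ} (hd : 1 ≤ d)
    (Ω : Set (Fin d → ℝ)) (hΩmeas : MeasurableSet Ω)
    (hΩbdd : Bornology.IsBounded Ω) (hΩpos : 0 < volume Ω)
    (ρn : ℕ → (Fin d → ℝ) → ℝ) (ρ : (Fin d → ℝ) → ℝ)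
    (hρnmeas : ∀ n, Measurable (ρn n)) (hρmeas : Measurable ρ)
    (hρn01 : ∀ n, ∀ᵐ x ∂(volume.restrict Ω), ρn n x ∈ Set.Icc (0 : ℝ) 1)
    (hρ01 : ∀ᵐ x ∂(volume.restrict Ω), ρ x ∈ Set.Icc (0 : ℝ) 1)
    -- weak-* convergence in L^∞(Ω)
    (hweak : ∀ g : (Fin d → ℝ) → ℝ, Integrable g (volume.restrict Ω) →
      Tendsto (fun n => ∫ x in Ω, ρn n x * g x) atTop
        (nhds (∫ x in Ω, ρ x * g x)))
    (Ωb : Set (Fin d → ℝ)) (hΩbmeas : MeasurableSet Ωb) (hΩbsub : Ωb ⊆ Ω)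
    (hΩbpos : 0 < volume Ωb)
    -- ρ is equal to zero or one a.e. in Ω_b
    (hbin : ∀ᵐ x ∂(volume.restrict Ωb), ρ x = 0 ∨ ρ x = 1) :
    ∀ s : ℝ, 1 ≤ s →
      Tendsto (fun n => ∫ x in Ωb, |ρn n x - ρ x| ^ s) atTop (nhds 0) := by
  intro s hs
  have hΩfin : volume Ω < ⊤ := hΩbdd.measure_lt_top
  have hΩbfin : volume Ωb < ⊤ := lt_of_le_of_lt (measure_mono hΩbsub) hΩfin
  haveI : IsFiniteMeasure (volume.restrict Ωb) := by
    constructor; simpa [Measure.restrict_apply_univ] using hΩbfin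
  -- a.e. bounds on Ωb
  have hρn01b : ∀ n, ∀ᵐ x ∂(volume.restrict Ωb), ρn n x ∈ Set.Icc (0 : ℝ) 1 :=
    fun n => ae_restrict_of_ae_restrict_of_subset hΩbsub (hρn01 n)
  have hρ01b : ∀ᵐ x ∂(volume.restrict Ωb), ρ x ∈ Set.Icc (0 : ℝ) 1 :=
    ae_restrict_of_ae_restrict_of_subset hΩbsub hρ01
  -- integrability of bounded measurable functions on Ωb
  have hint : ∀ (f : (Fin d → ℝ) → ℝ), Measurable f →
      (∀ᵐ x ∂(volume.restrict Ωb), |f x| ≤ 1) → Integrable f (volume.restrict Ωb) := by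
    intro f hf hb
    exact (integrable_const (1 : ℝ)).mono' hf.aestronglyMeasurable hb
  have hintρn : ∀ n, Integrable (ρn n) (volume.restrict Ωb) := by
    intro n
    refine hint _ (hρnmeas n) ?_
    filter_upwards [hρn01b n] with x hx
    rw [abs_le]; exact ⟨le_trans (by norm_num) hx.1, hx.2⟩
  have hintρ : Integrable ρ (volume.restrict Ωb) := by
    refine hint _ hρmeas ?_
    filter_upwards [hρ01b] with x hx
    rw [abs_le]; exact ⟨le_trans (by norm_num) hx.1, hx.2⟩
  have hintmul : ∀ n, Integrable (fun x => ρn n x * ρ x) (volume.restrict Ωb) := by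
    intro n
    refine hint _ ((hρnmeas n).mul hρmeas) ?_
    filter_upwards [hρn01b n, hρ01b] with x hx hy
    rw [abs_mul]
    have h1 : |ρn n x| ≤ 1 := by rw [abs_le]; exact ⟨le_trans (by norm_num) hx.1, hx.2⟩
    have h2 : |ρ x| ≤ 1 := by rw [abs_le]; exact ⟨le_trans (by norm_num) hy.1, hy.2⟩
    nlinarith [abs_nonneg (ρn n x), abs_nonneg (ρ x)]
  -- Step 1: ∫_{Ωb} ρn → ∫_{Ωb} ρ
  have key : ∀ (f : (Fin d → ℝ) → ℝ), Measurable f → Integrable f (volume.restrict Ωb) →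
      Tendsto (fun n => ∫ x in Ωb, ρn n x * f x) atTop (nhds (∫ x in Ωb, ρ x * f x)) := by
    intro f hf hfint
    have hg : Integrable (Ωb.indicator f) (volume.restrict Ω) := by
      rw [integrable_indicator_iff hΩbmeas]
      unfold IntegrableOn
      rw [Measure.restrict_restrict hΩbmeas, Set.inter_eq_self_of_subset_left hΩbsub]
      exact hfint
    have := hweak (Ωb.indicator f) hg
    have hrw : ∀ (h : (Fin d → ℝ) → ℝ),
        (∫ x in Ω, h x * Ωb.indicator f x) = ∫ x in Ωb, h x * f x := by
      intro h
      have heq : (∫ x in Ω, h x * Ωb.indicator f x)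
          = ∫ x in Ω, Ωb.indicator (fun y => h y * f y) x := by
        refine integral_congr_ae (Filter.Eventually.of_forall fun x => ?_)
        by_cases hx : x ∈ Ωb <;> simp [Set.indicator_of_mem, Set.indicator_of_notMem, hx]
      rw [heq, setIntegral_indicator hΩbmeas, Set.inter_eq_self_of_subset_right hΩbsub]
    simp only [hrw] at this
    exact this
  have hA : Tendsto (fun n => ∫ x in Ωb, ρn n x) atTop (nhds (∫ x in Ωb, ρ x)) := by
    have := key (fun _ => 1) measurable_const (integrable_const 1)
    simpa using this
  have hC : Tendsto (fun n => ∫ x in Ωb, ρn n x * ρ x) atTop (nhds (∫ x in Ωb, ρ x)) := by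
    have := key ρ hρmeas hintρ
    have heq : (∫ x in Ωb, ρ x * ρ x) = ∫ x in Ωb, ρ x := by
      refine integral_congr_ae ?_
      filter_upwards [hbin] with x hx
      rcases hx with h | h <;> simp [h]
    rwa [heq] at this
  -- the majorant
  set B := ∫ x in Ωb, ρ x with hB
  have hI : Tendsto (fun n => ∫ x in Ωb, (ρn n x + ρ x - 2 * (ρn n x * ρ x))) atTop
      (nhds 0) := by
    have heq : ∀ n, (∫ x in Ωb, (ρn n x + ρ x - 2 * (ρn n x * ρ x)))
        = (∫ x in Ωb, ρn n x) + B - 2 * (∫ x in Ωb, ρn n x * ρ x) := by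
      intro n
      have hadd : Integrable (fun x => ρn n x + ρ x) (volume.restrict Ωb) :=
        (hintρn n).add hintρ
      have hmul2 : Integrable (fun x => 2 * (ρn n x * ρ x)) (volume.restrict Ωb) :=
        (hintmul n).const_mul 2
      have h2 := integral_sub (f := fun x => ρn n x + ρ x)
        (g := fun x => 2 * (ρn n x * ρ x)) hadd hmul2
      have h3 := integral_add (f := fun x => ρn n x) (g := fun x => ρ x)
        (hintρn n) hintρ
      beta_reduce at h2 h3
      rw [h3, integral_const_mul] at h2
      exact h2
    simp only [heq]
    have : Tendsto (fun n => (∫ x in Ωb, ρn n x) + B - 2 * (∫ x in Ωb, ρn n x * ρ x)) atTop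
        (nhds (B + B - 2 * B)) := ((hA.add tendsto_const_nhds).sub (hC.const_mul 2))
    have hz : B + B - 2 * B = 0 := by ring
    rwa [hz] at this
  -- squeeze
  have hle : ∀ n, (∫ x in Ωb, |ρn n x - ρ x| ^ s)
      ≤ ∫ x in Ωb, (ρn n x + ρ x - 2 * (ρn n x * ρ x)) := by
    intro n
    refine integral_mono_of_nonneg ?_ (((hintρn n).add hintρ).sub ((hintmul n).const_mul 2)) ?_
    · filter_upwards with x
      exact Real.rpow_nonneg (abs_nonneg _) s
    · filter_upwards [hρn01b n, hbin] with x hx hb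
      have h1 : |ρn n x - ρ x| ^ s ≤ |ρn n x - ρ x| := by
        have habs : |ρn n x - ρ x| ≤ 1 := by
          rw [abs_le]
          rcases hb with h | h <;> rw [h] <;> constructor <;> nlinarith [hx.1, hx.2]
        rcases eq_or_lt_of_le (abs_nonneg (ρn n x - ρ x)) with h0 | h0
        · rw [← h0, Real.zero_rpow (by linarith : s ≠ 0)]
        · calc |ρn n x - ρ x| ^ s ≤ |ρn n x - ρ x| ^ (1 : ℝ) :=
              Real.rpow_le_rpow_of_exponent_ge h0 habs hs
            _ = |ρn n x - ρ x| := Real.rpow_one _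
      refine h1.trans ?_
      rcases hb with h | h
      · rw [h]; rw [abs_of_nonneg (by linarith [hx.1])]; ring_nf; rfl
      · rw [h]; rw [abs_of_nonpos (by linarith [hx.2])]; nlinarith [hx.1, hx.2]
  have hge : ∀ n, (0 : ℝ) ≤ ∫ x in Ωb, |ρn n x - ρ x| ^ s := by
    intro n
    refine integral_nonneg fun x => Real.rpow_nonneg (abs_nonneg _) s
  exact squeeze_zero hge hle hI
end

section
/- Let Ω ⊂ ℝ^d (d ≥ 1) be a bounded Lebesgue-measurable set with |Ω| > 0, equipped with Lebesgue measure, and let d′ ≥ 1. Let ᾱ > 0 and let α : [0,1] → [0, ᾱ] be convex and continuously differentiable, and let f ∈ L²(Ω)^{d′}. Let ρ_n, ρ : Ω → [0,1] be measurable with ρ_n converging weakly-* to ρ in L^∞(Ω) (∫_Ω ρ_n φ dx → ∫_Ω ρ φ dx for every φ ∈ L¹(Ω)), and let u_n, u ∈ L²(Ω)^{d′} with u_n → u strongly in L²(Ω)^{d′}. Then (1/2)∫_Ω (α(ρ)|u|² − 2 f·u) dx ≤ liminf_{n→∞} (1/2)∫_Ω (α(ρ_n)|u_n|² − 2 f·u_n)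 dx. -/
/-!
Write `J₁(uₙ, ρₙ) = ½∫α(ρₙ)|u|² + ½∫α(ρₙ)(|uₙ|² − |u|²) − ∫f·uₙ`. Since `α` is bounded on
`[0, 1]`, strong `L²` convergence sends the last two terms to `0` and `−∫f·u`. For the first,
convexity gives the tangent-line bound `α(ρₙ) ≥ α(ρ) + α'(ρ)(ρₙ − ρ)`; integrated against `|u|²`
its error term `∫(ρₙ − ρ) α'(ρ)|u|²` tends to `0` because `α'(ρ)|u|²` is an `L¹` test function
for the weak-* convergence of `ρₙ`.
-/

open MeasureTheory Filter Topology

theorem ContinuousOn.comp_measurable {X Y Z : Type*} [MeasurableSpace X] [TopologicalSpace Y]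
    [MeasurableSpace Y] [OpensMeasurableSpace Y] [TopologicalSpace Z] [MeasurableSpace Z]
    [BorelSpace Z] {β : Y → Z} {s : Set Y} (hβ : ContinuousOn β s) {ρ : X → Y}
    (hρ : Measurable ρ) (hρs : ∀ x, ρ x ∈ s) : Measurable fun x => β (ρ x) :=
  hβ.domRestrict.measurable.comp (hρ.subtype_mk (h := hρs))

theorem abs_norm_sq_sub_norm_sq_le {E : Type*} [SeminormedAddCommGroup E] (a b : E) :
    |‖a‖ ^ 2 - ‖b‖ ^ 2| ≤ ‖a - b‖ ^ 2 + 2 * (‖b‖ * ‖a - b‖) := by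
  have h := abs_norm_sub_norm_le a b
  have ha : ‖a‖ ≤ ‖a - b‖ + ‖b‖ := norm_le_norm_sub_add a b
  rw [abs_le] at h ⊢
  constructor <;> nlinarith [norm_nonneg a, norm_nonneg b, norm_nonneg (a - b)]

theorem ConvexOn.add_derivWithin_mul_sub_le {S : Set ℝ} {α : ℝ → ℝ} (hα : ConvexOn ℝ S α)
    {a b : ℝ} (ha : a ∈ S) (hb : b ∈ S) (hd : DifferentiableWithinAt ℝ α S a) :
    α a + derivWithin α S a * (b - a) ≤ α b := by
  rcases lt_trichotomy a b with hab | rfl | hba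
  · have := hα.derivWithin_le_slope ha hb hab hd
    rw [slope_def_field, le_div_iff₀ (sub_pos.mpr hab)] at this
    linarith
  · simp
  · have := hα.slope_le_derivWithin hb ha hba hd
    rw [slope_def_field, div_le_iff₀ (sub_pos.mpr hba)] at this
    linarith

theorem le_liminf_of_tendsto_of_le {ι β : Type*} [ConditionallyCompleteLinearOrder β]
    [TopologicalSpace β] [OrderTopology β] {l : Filter ι} [NeBot l] {w v : ι → β} {b : β}
    (hw : Tendsto w l (𝓝 b)) (hwv : ∀ᶠ i in l, w i ≤ v i) (hv : IsBoundedUnder (· ≤ ·) l v) :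
    b ≤ liminf v l :=
  hw.liminf_eq ▸ liminf_le_liminf hwv hw.isBoundedUnder_ge hv.isCoboundedUnder_ge

variable {X : Type*} [MeasurableSpace X] {μ : Measure X}

theorem IsCompact.integrable_comp_mul {Y : Type*} [TopologicalSpace Y] [MeasurableSpace Y]
    [OpensMeasurableSpace Y] {β : Y → ℝ} {s : Set Y} (hs : IsCompact s) (hβ : ContinuousOn β s)
    {ρ : X → Y} (hρ : Measurable ρ) (hρs : ∀ x, ρ x ∈ s) {g : X → ℝ} (hg : Integrable g μ) :
    Integrable (fun x => β (ρ x) * g x) μ := by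
  obtain ⟨C, hC⟩ := hs.exists_bound_of_continuousOn hβ
  exact hg.bdd_mul (hβ.comp_measurable hρ hρs).aestronglyMeasurable
    (Eventually.of_forall fun x => hC _ (hρs x))

theorem half_mul_integral_sub_two_mul {a b : X → ℝ} (ha : Integrable a μ) (hb : Integrable b μ) :
    (1 / 2) * ∫ x, (a x - 2 * b x) ∂μ = (1 / 2) * ∫ x, a x ∂μ - ∫ x, b x ∂μ := by
  rw [integral_sub ha (hb.const_mul 2), integral_const_mul]
  ring

theorem integral_norm_mul_norm_le_sqrt_mul_sqrt {E : Type*} [NormedAddCommGroup E] {g h : X → E}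
    (hg : MemLp g 2 μ) (hh : MemLp h 2 μ) :
    ∫ x, ‖g x‖ * ‖h x‖ ∂μ ≤ √(∫ x, ‖g x‖ ^ 2 ∂μ) * √(∫ x, ‖h x‖ ^ 2 ∂μ) := by
  have := integral_mul_norm_le_Lp_mul_Lq (μ := μ) Real.HolderConjugate.two_two
    (by simpa using hg) (by simpa using hh)
  simpa [Real.sqrt_eq_rpow] using this

theorem tendsto_integral_norm_mul_norm_of_tendsto_integral_norm_sq {E : Type*}
    [NormedAddCommGroup E] {v : X → E} {w : ℕ → X → E} (hv : MemLp v 2 μ)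
    (hw : ∀ n, MemLp (w n) 2 μ) (h : Tendsto (fun n => ∫ x, ‖w n x‖ ^ 2 ∂μ) atTop (𝓝 0)) :
    Tendsto (fun n => ∫ x, ‖v x‖ * ‖w n x‖ ∂μ) atTop (𝓝 0) := by
  have hsqrt : Tendsto (fun n => √(∫ x, ‖v x‖ ^ 2 ∂μ) * √(∫ x, ‖w n x‖ ^ 2 ∂μ)) atTop
      (𝓝 0) := by
    simpa using ((Real.continuous_sqrt.tendsto 0).comp h).const_mul (√(∫ x, ‖v x‖ ^ 2 ∂μ))
  exact squeeze_zero (fun n => integral_nonneg fun x => by positivity)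
    (fun n => integral_norm_mul_norm_le_sqrt_mul_sqrt hv (hw n)) hsqrt

theorem tendsto_integral_mul_norm_sq_sub_integral_mul_norm_sq {E : Type*} [NormedAddCommGroup E]
    {u : X → E} {un : ℕ → X → E} {w : ℕ → X → ℝ} {c : ℝ}
    (hw : ∀ n, AEStronglyMeasurable (w n) μ) (hwc : ∀ n x, ‖w n x‖ ≤ c)
    (hun : ∀ n, MemLp (un n) 2 μ) (hu : MemLp u 2 μ)
    (h : Tendsto (fun n => ∫ x, ‖un n x - u x‖ ^ 2 ∂μ) atTop (𝓝 0)) :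
    Tendsto (fun n => ∫ x, w n x * ‖un n x‖ ^ 2 ∂μ - ∫ x, w n x * ‖u x‖ ^ 2 ∂μ) atTop
      (𝓝 0) := by
  have hbound : ∀ n, ‖∫ x, w n x * ‖un n x‖ ^ 2 ∂μ - ∫ x, w n x * ‖u x‖ ^ 2 ∂μ‖ ≤
      c * (∫ x, ‖un n x - u x‖ ^ 2 ∂μ + 2 * ∫ x, ‖u x‖ * ‖un n x - u x‖ ∂μ) := fun n => by
    have hwun : Integrable (fun x => w n x * ‖un n x‖ ^ 2) μ :=
      ((hun n).integrable_norm_pow two_ne_zero).bdd_mul (hw n) (Eventually.of_forall (hwc n))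
    have hwu : Integrable (fun x => w n x * ‖u x‖ ^ 2) μ :=
      (hu.integrable_norm_pow two_ne_zero).bdd_mul (hw n) (Eventually.of_forall (hwc n))
    have hsq : Integrable (fun x => ‖un n x - u x‖ ^ 2) μ :=
      ((hun n).sub hu).integrable_norm_pow two_ne_zero
    have hmul : Integrable (fun x => ‖u x‖ * ‖un n x - u x‖) μ :=
      hu.norm.integrable_mul ((hun n).sub hu).norm
    calc ‖∫ x, w n x * ‖un n x‖ ^ 2 ∂μ - ∫ x, w n x * ‖u x‖ ^ 2 ∂μ‖
        = ‖∫ x, w n x * (‖un n x‖ ^ 2 - ‖u x‖ ^ 2) ∂μ‖ := by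
          simp_rw [mul_sub, integral_sub hwun hwu]
      _ ≤ ∫ x, c * (‖un n x - u x‖ ^ 2 + 2 * (‖u x‖ * ‖un n x - u x‖)) ∂μ := by
          refine norm_integral_le_of_norm_le ((hsq.add (hmul.const_mul 2)).const_mul c)
            (Eventually.of_forall fun x => ?_)
          rw [norm_mul, Real.norm_eq_abs (_ - _)]
          exact mul_le_mul (hwc n x) (abs_norm_sq_sub_norm_sq_le _ _) (abs_nonneg _)
            ((norm_nonneg _).trans (hwc n x))
      _ = c * (∫ x, ‖un n x - u x‖ ^ 2 ∂μ + 2 * ∫ x, ‖u x‖ * ‖un n x - u x‖ ∂μ) := by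
          rw [integral_const_mul, integral_add hsq (hmul.const_mul 2), integral_const_mul]
  have hlim : Tendsto (fun n => c * (∫ x, ‖un n x - u x‖ ^ 2 ∂μ +
      2 * ∫ x, ‖u x‖ * ‖un n x - u x‖ ∂μ)) atTop (𝓝 0) := by
    simpa using (h.add ((tendsto_integral_norm_mul_norm_of_tendsto_integral_norm_sq hu
      (fun n => (hun n).sub hu) h).const_mul 2)).const_mul c
  exact squeeze_zero_norm hbound hlim

theorem isBoundedUnder_le_integral_mul_norm_sq {E : Type*} [NormedAddCommGroup E]
    {u : X → E} {un : ℕ → X → E} {w : ℕ → X → ℝ} {c : ℝ}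
    (hw : ∀ n, AEStronglyMeasurable (w n) μ) (hwc : ∀ n x, ‖w n x‖ ≤ c)
    (hun : ∀ n, MemLp (un n) 2 μ) (hu : MemLp u 2 μ)
    (h : Tendsto (fun n => ∫ x, ‖un n x - u x‖ ^ 2 ∂μ) atTop (𝓝 0)) :
    IsBoundedUnder (· ≤ ·) atTop (fun n => ∫ x, w n x * ‖un n x‖ ^ 2 ∂μ) := by
  have hg := hu.integrable_norm_pow two_ne_zero
  have hwu : ∀ n, ∫ x, w n x * ‖u x‖ ^ 2 ∂μ ≤ c * ∫ x, ‖u x‖ ^ 2 ∂μ := fun n => by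
    rw [← integral_const_mul]
    exact integral_mono (hg.bdd_mul (hw n) (Eventually.of_forall (hwc n))) (hg.const_mul c)
      fun x => mul_le_mul_of_nonneg_right ((Real.le_norm_self _).trans (hwc n x)) (by positivity)
  obtain ⟨B, hB⟩ := (tendsto_integral_mul_norm_sq_sub_integral_mul_norm_sq hw hwc hun hu
    h).isBoundedUnder_le
  refine ⟨B + c * ∫ x, ‖u x‖ ^ 2 ∂μ, eventually_map.2 ?_⟩
  filter_upwards [eventually_map.1 hB] with n hn
  linarith [hwu n]

theorem ConvexOn.integral_comp_mul_add_le {S : Set ℝ} (hS : IsCompact S) (hS' : UniqueDiffOn ℝ S)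
    {α : ℝ → ℝ} (hconv : ConvexOn ℝ S α) (hα : ContDiffOn ℝ 1 α S) {ρ σ : X → ℝ}
    (hρ : Measurable ρ) (hσ : Measurable σ) (hρS : ∀ x, ρ x ∈ S) (hσS : ∀ x, σ x ∈ S)
    {g : X → ℝ} (hg : Integrable g μ) (hg0 : ∀ x, 0 ≤ g x) :
    ∫ x, α (ρ x) * g x ∂μ + (∫ x, σ x * (derivWithin α S (ρ x) * g x) ∂μ -
      ∫ x, ρ x * (derivWithin α S (ρ x) * g x) ∂μ) ≤ ∫ x, α (σ x) * g x ∂μ := by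
  have hφ : Integrable (fun x => derivWithin α S (ρ x) * g x) μ :=
    hS.integrable_comp_mul (hα.continuousOn_derivWithin hS' le_rfl) hρ hρS hg
  have hσφ := hS.integrable_comp_mul (continuousOn_id' _) hσ hσS hφ
  have hρφ := hS.integrable_comp_mul (continuousOn_id' _) hρ hρS hφ
  have hαρ := hS.integrable_comp_mul hα.continuousOn hρ hρS hg
  have hlin : Integrable (fun x => σ x * (derivWithin α S (ρ x) * g x) -
      ρ x * (derivWithin α S (ρ x) * g x)) μ := hσφ.sub hρφ
  rw [← integral_sub hσφ hρφ, ← integral_add hαρ hlin]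
  refine integral_mono (hαρ.add hlin) (hS.integrable_comp_mul hα.continuousOn hσ hσS hg)
    fun x => ?_
  have htangent := hconv.add_derivWithin_mul_sub_le (hρS x) (hσS x)
    ((hα.differentiableOn one_ne_zero) _ (hρS x))
  calc α (ρ x) * g x + (σ x * (derivWithin α S (ρ x) * g x) - ρ x * (derivWithin α S (ρ x) * g x))
      = (α (ρ x) + derivWithin α S (ρ x) * (σ x - ρ x)) * g x := by ring
    _ ≤ α (σ x) * g x := mul_le_mul_of_nonneg_right htangent (hg0 x)

theorem ConvexOn.exists_tendsto_le_integral_comp_mul_norm_sq {E : Type*} [NormedAddCommGroup E]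
    {S : Set ℝ} (hS : IsCompact S) (hS' : UniqueDiffOn ℝ S) {α : ℝ → ℝ} (hconv : ConvexOn ℝ S α)
    (hα : ContDiffOn ℝ 1 α S) {ρn : ℕ → X → ℝ} {ρ : X → ℝ} (hρn : ∀ n, Measurable (ρn n))
    (hρ : Measurable ρ) (hρnS : ∀ n x, ρn n x ∈ S) (hρS : ∀ x, ρ x ∈ S)
    (hweak : ∀ φ : X → ℝ, Integrable φ μ →
      Tendsto (fun n => ∫ x, ρn n x * φ x ∂μ) atTop (𝓝 (∫ x, ρ x * φ x ∂μ)))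
    {u : X → E} {un : ℕ → X → E} (hun : ∀ n, MemLp (un n) 2 μ) (hu : MemLp u 2 μ)
    (h : Tendsto (fun n => ∫ x, ‖un n x - u x‖ ^ 2 ∂μ) atTop (𝓝 0)) :
    ∃ v : ℕ → ℝ, Tendsto v atTop (𝓝 (∫ x, α (ρ x) * ‖u x‖ ^ 2 ∂μ)) ∧
      ∀ n, v n ≤ ∫ x, α (ρn n x) * ‖un n x‖ ^ 2 ∂μ := by
  obtain ⟨M, hM⟩ := hS.exists_bound_of_continuousOn hα.continuousOn
  have hg := hu.integrable_norm_pow two_ne_zero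
  set φ := fun x => derivWithin α S (ρ x) * ‖u x‖ ^ 2
  refine ⟨fun n => ∫ x, α (ρ x) * ‖u x‖ ^ 2 ∂μ + (∫ x, ρn n x * φ x ∂μ - ∫ x, ρ x * φ x ∂μ) +
    (∫ x, α (ρn n x) * ‖un n x‖ ^ 2 ∂μ - ∫ x, α (ρn n x) * ‖u x‖ ^ 2 ∂μ), ?_, fun n => ?_⟩
  · have he := (hweak φ (hS.integrable_comp_mul (hα.continuousOn_derivWithin hS' le_rfl) hρ hρS
      hg)).sub_const (∫ x, ρ x * φ x ∂μ)
    have hQA := tendsto_integral_mul_norm_sq_sub_integral_mul_norm_sq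
      (fun n => (hα.continuousOn.comp_measurable (hρn n) (hρnS n)).aestronglyMeasurable)
      (fun n x => hM _ (hρnS n x)) hun hu h
    simpa using (he.const_add _).add hQA
  · linarith [hconv.integral_comp_mul_add_le hS hS' hα hρ (hρn n) hρS (hρnS n) hg
      fun x => by positivity]

section InnerProductSpace

variable {E : Type*} [NormedAddCommGroup E] [InnerProductSpace ℝ E]

theorem MeasureTheory.MemLp.integrable_inner {f g : X → E} (hf : MemLp f 2 μ)
    (hg : MemLp g 2 μ) : Integrable (fun x => inner ℝ (f x) (g x)) μ :=
  (hf.norm.integrable_mul hg.norm).mono' (hf.1.inner hg.1)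
    (Eventually.of_forall fun x => norm_inner_le_norm (f x) (g x))

theorem tendsto_integral_inner_of_tendsto_integral_norm_sub_sq {f u : X → E} {un : ℕ → X → E}
    (hf : MemLp f 2 μ) (hun : ∀ n, MemLp (un n) 2 μ) (hu : MemLp u 2 μ)
    (h : Tendsto (fun n => ∫ x, ‖un n x - u x‖ ^ 2 ∂μ) atTop (𝓝 0)) :
    Tendsto (fun n => ∫ x, inner ℝ (f x) (un n x) ∂μ) atTop
      (𝓝 (∫ x, inner ℝ (f x) (u x) ∂μ)) := by
  have hbound : ∀ n, ‖∫ x, inner ℝ (f x) (un n x) ∂μ - ∫ x, inner ℝ (f x) (u x) ∂μ‖ ≤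
      ∫ x, ‖f x‖ * ‖un n x - u x‖ ∂μ := fun n => by
    rw [← integral_sub (hf.integrable_inner (hun n)) (hf.integrable_inner hu)]
    refine norm_integral_le_of_norm_le (hf.norm.integrable_mul ((hun n).sub hu).norm)
      (Eventually.of_forall fun x => ?_)
    rw [← inner_sub_right]
    exact norm_inner_le_norm _ _
  exact tendsto_iff_norm_sub_tendsto_zero.2 <| squeeze_zero (fun n => norm_nonneg _) hbound
    (tendsto_integral_norm_mul_norm_of_tendsto_integral_norm_sq hf (fun n => (hun n).sub hu) h)

end InnerProductSpace

theorem J1_lower_semicontinuity_general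
    {d d' : ℕ}
    (Ω : Set (Fin d → ℝ))
    (α : ℝ → ℝ)
    (hαconv : ConvexOn ℝ (Set.Icc (0 : ℝ) 1) α)
    (hαC1 : ContDiffOn ℝ 1 α (Set.Icc (0 : ℝ) 1))
    (f : (Fin d → ℝ) → EuclideanSpace ℝ (Fin d'))
    (hf : MemLp f 2 (volume.restrict Ω))
    (ρn : ℕ → (Fin d → ℝ) → ℝ) (ρ : (Fin d → ℝ) → ℝ)
    (hρnmeas : ∀ n, Measurable (ρn n)) (hρmeas : Measurable ρ)
    (hρn01 : ∀ n x, ρn n x ∈ Set.Icc (0 : ℝ) 1)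
    (hρ01 : ∀ x, ρ x ∈ Set.Icc (0 : ℝ) 1)
    -- weak-* convergence of ρ_n to ρ in L^∞(Ω)
    (hweak : ∀ φ : (Fin d → ℝ) → ℝ, Integrable φ (volume.restrict Ω) →
      Tendsto (fun n => ∫ x in Ω, ρn n x * φ x) atTop
        (nhds (∫ x in Ω, ρ x * φ x)))
    (un : ℕ → (Fin d → ℝ) → EuclideanSpace ℝ (Fin d'))
    (u : (Fin d → ℝ) → EuclideanSpace ℝ (Fin d'))
    (hun : ∀ n, MemLp (un n) 2 (volume.restrict Ω))
    (hu : MemLp u 2 (volume.restrict Ω))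
    -- strong convergence of u_n to u in L²(Ω)
    (hstrong : Tendsto (fun n => ∫ x in Ω, ‖un n x - u x‖ ^ 2) atTop (nhds 0)) :
    (1 / 2) * (∫ x in Ω, (α (ρ x) * ‖u x‖ ^ 2 - 2 * (inner ℝ (f x) (u x) : ℝ))) ≤
      liminf (fun n =>
        (1 / 2) * ∫ x in Ω, (α (ρn n x) * ‖un n x‖ ^ 2 - 2 * (inner ℝ (f x) (un n x) : ℝ)))
        atTop := by
  have hS : IsCompact (Set.Icc (0 : ℝ) 1) := isCompact_Icc
  obtain ⟨M, hM⟩ := hS.exists_bound_of_continuousOn hαC1.continuousOn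
  have hJn : ∀ n, (1 / 2) * ∫ x in Ω, (α (ρn n x) * ‖un n x‖ ^ 2 -
      2 * (inner ℝ (f x) (un n x) : ℝ)) = (1 / 2) * (∫ x in Ω, α (ρn n x) * ‖un n x‖ ^ 2) -
      ∫ x in Ω, (inner ℝ (f x) (un n x) : ℝ) := fun n =>
    half_mul_integral_sub_two_mul (hS.integrable_comp_mul hαC1.continuousOn (hρnmeas n) (hρn01 n)
      ((hun n).integrable_norm_pow two_ne_zero)) (hf.integrable_inner (hun n))
  rw [half_mul_integral_sub_two_mul (hS.integrable_comp_mul hαC1.continuousOn hρmeas hρ01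
    (hu.integrable_norm_pow two_ne_zero)) (hf.integrable_inner hu)]
  simp only [hJn]
  obtain ⟨v, hv, hvQ⟩ := hαconv.exists_tendsto_le_integral_comp_mul_norm_sq hS
    (uniqueDiffOn_Icc one_pos) hαC1 hρnmeas hρmeas hρn01 hρ01 hweak hun hu hstrong
  obtain ⟨B, hB⟩ := isBoundedUnder_le_integral_mul_norm_sq
    (fun n => (hαC1.continuousOn.comp_measurable (hρnmeas n) (hρn01 n)).aestronglyMeasurable)
    (fun n x => hM _ (hρn01 n x)) hun hu hstrong
  have hL := tendsto_integral_inner_of_tendsto_integral_norm_sub_sq hf hun hu hstrong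
  obtain ⟨B', hB'⟩ := hL.isBoundedUnder_ge
  refine le_liminf_of_tendsto_of_le ((hv.const_mul (1 / 2)).sub hL)
    (Eventually.of_forall fun n => by linarith [hvQ n]) ⟨(1 / 2) * B - B', eventually_map.2 ?_⟩
  filter_upwards [eventually_map.1 hB, eventually_map.1 hB'] with n hn hn'
  linarith

/-- Lower semicontinuity of the lower-order part
`J₁(u,ρ) = (1/2)∫_Ω (α(ρ)|u|² − 2 f·u) dx` of the Borrvall–Petersson functional,
under weak-* convergence of `ρ_n` in `L^∞(Ω)` and strong `L²` convergence of `u_n`. -/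
theorem J1_lower_semicontinuity
    {d d' : ℕ} (hd : 1 ≤ d) (hd' : 1 ≤ d')
    (Ω : Set (Fin d → ℝ)) (hΩmeas : MeasurableSet Ω)
    (hΩbdd : Bornology.IsBounded Ω) (hΩpos : 0 < volume Ω)
    (abar : ℝ) (habar : 0 < abar)
    (α : ℝ → ℝ)
    (hαrange : ∀ y ∈ Set.Icc (0 : ℝ) 1, α y ∈ Set.Icc (0 : ℝ) abar)
    (hαconv : ConvexOn ℝ (Set.Icc (0 : ℝ) 1) α)
    (hαC1 : ContDiffOn ℝ 1 α (Set.Icc (0 : ℝ) 1))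
    (f : (Fin d → ℝ) → EuclideanSpace ℝ (Fin d'))
    (hf : MemLp f 2 (volume.restrict Ω))
    (ρn : ℕ → (Fin d → ℝ) → ℝ) (ρ : (Fin d → ℝ) → ℝ)
    (hρnmeas : ∀ n, Measurable (ρn n)) (hρmeas : Measurable ρ)
    (hρn01 : ∀ n x, ρn n x ∈ Set.Icc (0 : ℝ) 1)
    (hρ01 : ∀ x, ρ x ∈ Set.Icc (0 : ℝ) 1)
    -- weak-* convergence of ρ_n to ρ in L^∞(Ω)
    (hweak : ∀ φ : (Fin d → ℝ) → ℝ, Integrable φ (volume.restrict Ω) →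
      Tendsto (fun n => ∫ x in Ω, ρn n x * φ x) atTop
        (nhds (∫ x in Ω, ρ x * φ x)))
    (un : ℕ → (Fin d → ℝ) → EuclideanSpace ℝ (Fin d'))
    (u : (Fin d → ℝ) → EuclideanSpace ℝ (Fin d'))
    (hun : ∀ n, MemLp (un n) 2 (volume.restrict Ω))
    (hu : MemLp u 2 (volume.restrict Ω))
    -- strong convergence of u_n to u in L²(Ω)
    (hstrong : Tendsto (fun n => ∫ x in Ω, ‖un n x - u x‖ ^ 2) atTop (nhds 0)) :
    (1 / 2) * (∫ x in Ω, (α (ρ x) * ‖u x‖ ^ 2 - 2 * (inner ℝ (f x) (u x) : ℝ))) ≤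
      liminf (fun n =>
        (1 / 2) * ∫ x in Ω, (α (ρn n x) * ‖un n x‖ ^ 2 - 2 * (inner ℝ (f x) (un n x) : ℝ)))
        atTop :=
  J1_lower_semicontinuity_general Ω α hαconv hαC1 f hf ρn ρ hρnmeas hρmeas hρn01 hρ01 hweak un u hun
    hu hstrong
end

section
/- Let Ω ⊂ ℝ^d (d ≥ 1) be a bounded Lebesgue-measurable set with |Ω| > 0, equipped with Lebesgue measure, and let d′ ≥ 1. Let m > 0 and θ > 0, and let α : ℝ → ℝ be twice continuously differentiable with α″(y) ≥ m for all y ∈ [0,1]. Let ρ, ρ_h, η_h : Ω → [0,1] be measurable, let u, u_h ∈ L⁴(Ω)^{d′}, and let U_θ ⊆ Ω be measurable with |u|² ≥ θ a.e. on U_θ. Assume the two variational inequalities ∫_Ω α′(ρ)|u|²(ρ_h − ρ) dx ≥ 0 and ∫_Ω α′(ρ_h)|u_h|²(η_h − ρ_h) dx ≥ 0 hold. Then m θ ∫_{U_θ} (ρ − ρ_h)² dx ≤ ∫_Ω α′(ρ_h)|u_h|²(η_h − ρ) dx + ∫_Ω α′(ρ_h)(|u_h|² − |u|²)(ρ − ρ_h)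 dx. -/
/-!
Write `G = (α'(ρ) − α'(ρ_h)) |u|² (ρ − ρ_h)`. Since `α'' ≥ m` on `[0, 1]`, the derivative `α'`
is strongly monotone there, so `G ≥ m |u|² (ρ − ρ_h)² ≥ 0` everywhere and `G ≥ m θ (ρ − ρ_h)²`
on `U_θ`.
Pointwise, `G` plus the two integrands of the variational inequalities equals the sum of the two
integrands on the right-hand side; integrating and dropping the two nonnegative terms gives the
estimate. All integrands are a bounded function times `|u|²` or `|u_h|²`, which are integrable
because `L⁴ ⊆ L²` on the bounded set `Ω`.
-/

open MeasureTheory Set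
open scoped ENNReal

theorem mul_sq_le_sub_mul_sub_of_le_deriv {g : ℝ → ℝ} {s : Set ℝ} {m : ℝ} (hs : Convex ℝ s)
    (hg : DifferentiableOn ℝ g s) (hm : ∀ y ∈ interior s, m ≤ deriv g y)
    {a b : ℝ} (ha : a ∈ s) (hb : b ∈ s) :
    m * (a - b) ^ 2 ≤ (g a - g b) * (a - b) := by
  have hmono : MonotoneOn (fun y => g y - m * y) s := by
    refine monotoneOn_of_deriv_nonneg hs (hg.continuousOn.sub (by fun_prop))
      ((hg.mono interior_subset).sub (by fun_prop)) fun y hy => ?_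
    have hgy : DifferentiableAt ℝ g y := hg.differentiableAt (mem_interior_iff_mem_nhds.1 hy)
    rw [(hgy.hasDerivAt.fun_sub ((hasDerivAt_id' y).const_mul m)).deriv, mul_one]
    linarith [hm y hy]
  rcases le_total b a with hba | hab
  · have := hmono hb ha hba
    nlinarith [mul_le_mul_of_nonneg_right this (sub_nonneg.2 hba)]
  · have := hmono ha hb hab
    nlinarith [mul_le_mul_of_nonneg_right this (sub_nonneg.2 hab)]

theorem mul_mul_sq_le_of_mul_sq_le {m θ w s D : ℝ} (hm : 0 ≤ m) (hθ : 0 ≤ θ) (hθw : θ ≤ w)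
    (hD : m * s ^ 2 ≤ D * s) : m * θ * s ^ 2 ≤ D * w * s := by
  nlinarith [mul_le_mul_of_nonneg_right hD hθ, mul_nonneg hm (sq_nonneg s)]

section

variable {X : Type*} [MeasurableSpace X] {μ : Measure X}

theorem Continuous.memLp_top_comp_of_isCompact {E : Type*} [NormedAddCommGroup E] {g : ℝ → E}
    (hg : Continuous g) {K : Set ℝ} (hK : IsCompact K) {f : X → ℝ}
    (hf : AEStronglyMeasurable f μ) (hfK : ∀ x, f x ∈ K) : MemLp (g ∘ f) ∞ μ := by
  obtain ⟨C, hC⟩ := hK.exists_bound_of_continuousOn hg.continuousOn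
  exact memLp_top_of_bound (hg.comp_aestronglyMeasurable hf) C (ae_of_all _ fun x => hC _ (hfK x))

theorem integral_sub_mul_mul_sub_le_of_integral_nonneg {g : ℝ → ℝ} {ρ ρh ηh w wh : X → ℝ}
    (hT1 : Integrable (fun x => g (ρh x) * wh x * (ηh x - ρ x)) μ)
    (hT2 : Integrable (fun x => g (ρh x) * (wh x - w x) * (ρ x - ρh x)) μ)
    (hF1 : Integrable (fun x => g (ρ x) * w x * (ρh x - ρ x)) μ)
    (hF2 : Integrable (fun x => g (ρh x) * wh x * (ηh x - ρh x)) μ)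
    (hfoc : 0 ≤ ∫ x, g (ρ x) * w x * (ρh x - ρ x) ∂μ)
    (hfoch : 0 ≤ ∫ x, g (ρh x) * wh x * (ηh x - ρh x) ∂μ) :
    ∫ x, (g (ρ x) - g (ρh x)) * w x * (ρ x - ρh x) ∂μ ≤
      (∫ x, g (ρh x) * wh x * (ηh x - ρ x) ∂μ) +
      ∫ x, g (ρh x) * (wh x - w x) * (ρ x - ρh x) ∂μ := by
  rw [integral_congr_ae (ae_of_all _ fun x => by ring :
    (fun x => (g (ρ x) - g (ρh x)) * w x * (ρ x - ρh x)) =ᵐ[μ] fun x =>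
      g (ρh x) * wh x * (ηh x - ρ x) + g (ρh x) * (wh x - w x) * (ρ x - ρh x) -
        g (ρ x) * w x * (ρh x - ρ x) - g (ρh x) * wh x * (ηh x - ρh x)),
    integral_sub, integral_sub, integral_add hT1 hT2]
  · linarith
  exacts [hT1.add hT2, hF1, (hT1.add hT2).sub hF1, hF2]

theorem mul_setIntegral_sq_sub_le_of_integral_nonneg [IsFiniteMeasure μ] {g : ℝ → ℝ} {m θ : ℝ}
    (hm : 0 ≤ m) (hθ : 0 ≤ θ) (hg : Continuous g)
    (hg_mono : ∀ a ∈ Icc (0 : ℝ) 1, ∀ b ∈ Icc (0 : ℝ) 1, m * (a - b) ^ 2 ≤ (g a - g b) * (a - b))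
    {ρ ρh ηh w wh : X → ℝ} (hρ : AEStronglyMeasurable ρ μ) (hρh : AEStronglyMeasurable ρh μ)
    (hηh : AEStronglyMeasurable ηh μ) (hρ01 : ∀ x, ρ x ∈ Icc (0 : ℝ) 1)
    (hρh01 : ∀ x, ρh x ∈ Icc (0 : ℝ) 1) (hηh01 : ∀ x, ηh x ∈ Icc (0 : ℝ) 1)
    (hw : Integrable w μ) (hwh : Integrable wh μ) (hw0 : ∀ x, 0 ≤ w x)
    {U : Set X} (hU : ∀ᵐ x ∂μ.restrict U, θ ≤ w x)
    (hfoc : 0 ≤ ∫ x, g (ρ x) * w x * (ρh x - ρ x) ∂μ)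
    (hfoch : 0 ≤ ∫ x, g (ρh x) * wh x * (ηh x - ρh x) ∂μ) :
    m * θ * ∫ x in U, (ρ x - ρh x) ^ 2 ∂μ ≤
      (∫ x, g (ρh x) * wh x * (ηh x - ρ x) ∂μ) +
      ∫ x, g (ρh x) * (wh x - w x) * (ρ x - ρh x) ∂μ := by
  have hρ_top : MemLp ρ ∞ μ := continuous_id.memLp_top_comp_of_isCompact isCompact_Icc hρ hρ01
  have hρh_top : MemLp ρh ∞ μ :=
    continuous_id.memLp_top_comp_of_isCompact isCompact_Icc hρh hρh01
  have hηh_top : MemLp ηh ∞ μ :=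
    continuous_id.memLp_top_comp_of_isCompact isCompact_Icc hηh hηh01
  have hgρ_top := hg.memLp_top_comp_of_isCompact isCompact_Icc hρ hρ01
  have hgρh_top := hg.memLp_top_comp_of_isCompact isCompact_Icc hρh hρh01
  have hmul : ∀ {c v s : X → ℝ}, MemLp c ∞ μ → Integrable v μ → MemLp s ∞ μ →
      Integrable (c * v * s) μ := fun hc hv hs => (hv.mul_of_top_right hc).mul_of_top_left hs
  have hG : Integrable (fun x => (g (ρ x) - g (ρh x)) * w x * (ρ x - ρh x)) μ :=
    hmul (hgρ_top.sub hgρh_top) hw (hρ_top.sub hρh_top)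
  have hG0 : ∀ x, 0 ≤ (g (ρ x) - g (ρh x)) * w x * (ρ x - ρh x) := fun x => by
    simpa using mul_mul_sq_le_of_mul_sq_le hm le_rfl (hw0 x) (hg_mono _ (hρ01 x) _ (hρh01 x))
  have hGU : ∀ᵐ x ∂μ.restrict U,
      m * θ * (ρ x - ρh x) ^ 2 ≤ (g (ρ x) - g (ρh x)) * w x * (ρ x - ρh x) := by
    filter_upwards [hU] with x hx
    exact mul_mul_sq_le_of_mul_sq_le hm hθ hx (hg_mono _ (hρ01 x) _ (hρh01 x))
  calc m * θ * ∫ x in U, (ρ x - ρh x) ^ 2 ∂μ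
      = ∫ x in U, m * θ * (ρ x - ρh x) ^ 2 ∂μ := (integral_const_mul _ _).symm
    _ ≤ ∫ x in U, (g (ρ x) - g (ρh x)) * w x * (ρ x - ρh x) ∂μ :=
      integral_mono_ae
        (((hρ_top.sub hρh_top).mono_exponent le_top).integrable_sq.restrict.const_mul _)
        hG.restrict hGU
    _ ≤ ∫ x, (g (ρ x) - g (ρh x)) * w x * (ρ x - ρh x) ∂μ :=
      setIntegral_le_integral hG (ae_of_all _ hG0)
    _ ≤ _ := integral_sub_mul_mul_sub_le_of_integral_nonneg
      (hmul hgρh_top hwh (hηh_top.sub hρ_top)) (hmul hgρh_top (hwh.sub hw) (hρ_top.sub hρh_top))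
      (hmul hgρ_top hw (hρh_top.sub hρ_top)) (hmul hgρh_top hwh (hηh_top.sub hρh_top)) hfoc hfoch

end

theorem material_distribution_key_estimate_general
    {d d' : ℕ}
    (Ω : Set (Fin d → ℝ))
    (hΩbdd : Bornology.IsBounded Ω)
    (m θ : ℝ) (hm : 0 < m) (hθ : 0 < θ)
    (α : ℝ → ℝ) (hα : ContDiff ℝ 2 α)
    (hα'' : ∀ y ∈ Set.Icc (0 : ℝ) 1, m ≤ deriv (deriv α) y)
    (ρ ρh ηh : (Fin d → ℝ) → ℝ)
    (hρmeas : Measurable ρ) (hρhmeas : Measurable ρh) (hηhmeas : Measurable ηh)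
    (hρ01 : ∀ x, ρ x ∈ Set.Icc (0 : ℝ) 1)
    (hρh01 : ∀ x, ρh x ∈ Set.Icc (0 : ℝ) 1)
    (hηh01 : ∀ x, ηh x ∈ Set.Icc (0 : ℝ) 1)
    (u uh : (Fin d → ℝ) → EuclideanSpace ℝ (Fin d'))
    (hu : MemLp u 4 (volume.restrict Ω)) (huh : MemLp uh 4 (volume.restrict Ω))
    (Uθ : Set (Fin d → ℝ)) (hUθΩ : Uθ ⊆ Ω)
    -- |u|² ≥ θ a.e. on U_θ
    (hUθ : ∀ᵐ x ∂(volume.restrict Uθ), θ ≤ ‖u x‖ ^ 2)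
    -- (FOC3) tested with η = ρ_h
    (hfoc : 0 ≤ ∫ x in Ω, deriv α (ρ x) * ‖u x‖ ^ 2 * (ρh x - ρ x))
    -- (FOC3-h) tested with η_h
    (hfoch : 0 ≤ ∫ x in Ω, deriv α (ρh x) * ‖uh x‖ ^ 2 * (ηh x - ρh x)) :
    m * θ * (∫ x in Uθ, (ρ x - ρh x) ^ 2) ≤
      (∫ x in Ω, deriv α (ρh x) * ‖uh x‖ ^ 2 * (ηh x - ρ x)) +
      ∫ x in Ω, deriv α (ρh x) * (‖uh x‖ ^ 2 - ‖u x‖ ^ 2) * (ρ x - ρh x) := by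
  have : IsFiniteMeasure (volume.restrict Ω) := isFiniteMeasure_restrict.2 hΩbdd.measure_lt_top.ne
  have hsq : ∀ {v : (Fin d → ℝ) → EuclideanSpace ℝ (Fin d')}, MemLp v 4 (volume.restrict Ω) →
      Integrable (fun x => ‖v x‖ ^ 2) (volume.restrict Ω) := fun hv =>
    (hv.mono_exponent (by norm_num)).norm.integrable_sq
  have hmono : ∀ a ∈ Icc (0 : ℝ) 1, ∀ b ∈ Icc (0 : ℝ) 1,
      m * (a - b) ^ 2 ≤ (deriv α a - deriv α b) * (a - b) := fun a ha b hb =>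
    mul_sq_le_sub_mul_sub_of_le_deriv (convex_Icc 0 1) hα.differentiable_deriv_two.differentiableOn
      (fun y hy => hα'' y (interior_subset hy)) ha hb
  rw [← Measure.restrict_restrict_of_subset hUθΩ] at hUθ ⊢
  exact mul_setIntegral_sq_sub_le_of_integral_nonneg hm.le hθ.le
    (hα.continuous_deriv (by norm_num)) hmono hρmeas.aestronglyMeasurable
    hρhmeas.aestronglyMeasurable hηhmeas.aestronglyMeasurable hρ01 hρh01 hηh01
    (hsq hu) (hsq huh) (fun x => by positivity) hUθ hfoc hfoch

/-- Key estimate for strong convergence of the discretized material distribution: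
combining the continuous and discretized first-order optimality conditions (FOC3)
and (FOC3-h) with the strong convexity of `α` yields
`m θ ∫_{U_θ} (ρ − ρ_h)² dx ≤ ∫_Ω α′(ρ_h)|u_h|²(η_h − ρ) dx
  + ∫_Ω α′(ρ_h)(|u_h|² − |u|²)(ρ − ρ_h) dx`. -/
theorem material_distribution_key_estimate
    {d d' : ℕ} (hd : 1 ≤ d) (hd' : 1 ≤ d')
    (Ω : Set (Fin d → ℝ)) (hΩmeas : MeasurableSet Ω)
    (hΩbdd : Bornology.IsBounded Ω) (hΩpos : 0 < volume Ω)
    (m θ : ℝ) (hm : 0 < m) (hθ : 0 < θ)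
    (α : ℝ → ℝ) (hα : ContDiff ℝ 2 α)
    (hα'' : ∀ y ∈ Set.Icc (0 : ℝ) 1, m ≤ deriv (deriv α) y)
    (ρ ρh ηh : (Fin d → ℝ) → ℝ)
    (hρmeas : Measurable ρ) (hρhmeas : Measurable ρh) (hηhmeas : Measurable ηh)
    (hρ01 : ∀ x, ρ x ∈ Set.Icc (0 : ℝ) 1)
    (hρh01 : ∀ x, ρh x ∈ Set.Icc (0 : ℝ) 1)
    (hηh01 : ∀ x, ηh x ∈ Set.Icc (0 : ℝ) 1)
    (u uh : (Fin d → ℝ) → EuclideanSpace ℝ (Fin d'))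
    (hu : MemLp u 4 (volume.restrict Ω)) (huh : MemLp uh 4 (volume.restrict Ω))
    (Uθ : Set (Fin d → ℝ)) (hUθmeas : MeasurableSet Uθ) (hUθΩ : Uθ ⊆ Ω)
    -- |u|² ≥ θ a.e. on U_θ
    (hUθ : ∀ᵐ x ∂(volume.restrict Uθ), θ ≤ ‖u x‖ ^ 2)
    -- (FOC3) tested with η = ρ_h
    (hfoc : 0 ≤ ∫ x in Ω, deriv α (ρ x) * ‖u x‖ ^ 2 * (ρh x - ρ x))
    -- (FOC3-h) tested with η_h
    (hfoch : 0 ≤ ∫ x in Ω, deriv α (ρh x) * ‖uh x‖ ^ 2 * (ηh x - ρh x)) :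
    m * θ * (∫ x in Uθ, (ρ x - ρh x) ^ 2) ≤
      (∫ x in Ω, deriv α (ρh x) * ‖uh x‖ ^ 2 * (ηh x - ρ x)) +
      ∫ x in Ω, deriv α (ρh x) * (‖uh x‖ ^ 2 - ‖u x‖ ^ 2) * (ρ x - ρh x) :=
  material_distribution_key_estimate_general Ω hΩbdd m θ hm hθ α hα hα'' ρ ρh ηh hρmeas hρhmeas
    hηhmeas hρ01 hρh01 hηh01 u uh hu huh Uθ hUθΩ hUθ hfoc hfoch
end

section
/- Let Ω ⊂ ℝ^d (d ≥ 1) be a bounded Lebesgue-measurable set with |Ω| > 0, equipped with Lebesgue measure, let γ ∈ (0,1), let d′ ≥ 1, let ρ ∈ C_γ, and let u ∈ L²(Ω)^{d′}. Suppose the set S := {x ∈ Ω : u(x) = 0 and ρ(x) > 0} has positive Lebesgue measure. Then for every ε > 0 there exists η ∈ C_γ such that: η differs from ρ on a set of positive measure; ‖η − ρ‖_{L²(Ω)} < ε; η = ρ a.e. on Ω \ S; and α(η(x))|u(x)|² = α(ρ(x))|u(x)|² for a.e. x ∈ Ω, for every function α : [0,1] → ℝ. In particular, for every bounded measurable α :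 [0,1] → ℝ, ∫_Ω α(η)|u|² dx = ∫_Ω α(ρ)|u|² dx, so ρ is not a strict minimizer of η ↦ ∫_Ω α(η)|u|² dx over C_γ with respect to the L²(Ω)-norm. -/
/-!
Since `u` is a.e. strongly measurable, `S` is null-measurable, so it contains a measurable `T` of
the same measure. Shrinking `ρ` by the factor `1 - t` on `T` keeps it in `C_γ` (it only
decreases), changes it on a set of positive measure, and `|η - ρ| ≤ t` gives
`‖η - ρ‖_{L²} ≤ t |Ω|^{1/2}`, small for small `t`. As `u = 0` on `T`, the weight `|u|²`
hides every change of `α(η)`.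
-/

open MeasureTheory Set

section ShrinkOn

variable {X : Type*} {T : Set X} {t : ℝ} {ρ : X → ℝ} {x : X}

open Classical in
noncomputable def shrinkOn (T : Set X) (t : ℝ) (ρ : X → ℝ) (x : X) : ℝ :=
  if x ∈ T then (1 - t) * ρ x else ρ x

theorem shrinkOn_of_mem (hx : x ∈ T) : shrinkOn T t ρ x = (1 - t) * ρ x :=
  if_pos hx

theorem shrinkOn_of_notMem (hx : x ∉ T) : shrinkOn T t ρ x = ρ x :=
  if_neg hx

theorem Measurable.shrinkOn [MeasurableSpace X] (hρ : Measurable ρ) (hT : MeasurableSet T) :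
    Measurable (shrinkOn T t ρ) :=
  Measurable.ite hT (measurable_const.mul hρ) hρ

theorem shrinkOn_mem_Icc (ht : t ∈ Icc (0 : ℝ) 1) (hρx : ρ x ∈ Icc (0 : ℝ) 1) :
    shrinkOn T t ρ x ∈ Icc (0 : ℝ) 1 := by
  by_cases hx : x ∈ T
  · rw [shrinkOn_of_mem hx]
    exact unitInterval.mul_mem (Icc.mem_iff_one_sub_mem.mp ht) hρx
  · rwa [shrinkOn_of_notMem hx]

theorem shrinkOn_le (ht : 0 ≤ t) (hρx : 0 ≤ ρ x) : shrinkOn T t ρ x ≤ ρ x := by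
  by_cases hx : x ∈ T
  · rw [shrinkOn_of_mem hx]
    exact mul_le_of_le_one_left hρx (by linarith)
  · rw [shrinkOn_of_notMem hx]

theorem abs_shrinkOn_sub_le (ht : 0 ≤ t) (hρx : ρ x ∈ Icc (0 : ℝ) 1) :
    |shrinkOn T t ρ x - ρ x| ≤ t := by
  by_cases hx : x ∈ T
  · rw [shrinkOn_of_mem hx, show (1 - t) * ρ x - ρ x = -(t * ρ x) by ring, abs_neg,
      abs_of_nonneg (mul_nonneg ht hρx.1)]
    exact mul_le_of_le_one_right ht hρx.2
  · simpa [shrinkOn_of_notMem hx] using ht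

theorem shrinkOn_ne (ht : t ≠ 0) (hx : x ∈ T) (hρx : ρ x ≠ 0) : shrinkOn T t ρ x ≠ ρ x := by
  rw [shrinkOn_of_mem hx, Ne, mul_eq_right₀ hρx]
  exact fun h => ht (by linarith)

theorem comp_shrinkOn_mul_eq (α : ℝ → ℝ) {w : X → ℝ} (hw : ∀ x ∈ T, w x = 0) (x : X) :
    α (shrinkOn T t ρ x) * w x = α (ρ x) * w x := by
  by_cases hx : x ∈ T
  · simp [hw x hx]
  · rw [shrinkOn_of_notMem hx]

end ShrinkOn

section Measure

variable {X : Type*} [MeasurableSpace X] {μ : Measure X}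

theorem MeasureTheory.NullMeasurableSet.sep_eq_zero {E : Type*} [TopologicalSpace E]
    [TopologicalSpace.MetrizableSpace E] [Zero E] {s : Set X} {u : X → E} (hs : NullMeasurableSet s μ)
    (hu : AEStronglyMeasurable u (μ.restrict s)) : NullMeasurableSet {x ∈ s | u x = 0} μ := by
  have h : NullMeasurableSet ({x | u x = 0} ∩ s) μ :=
    (nullMeasurableSet_restrict hs).mp (hu.nullMeasurableSet_eq_fun aestronglyMeasurable_const)
  rwa [inter_comm] at h

theorem sqrt_integral_sq_le_mul_sqrt_measureReal [IsFiniteMeasure μ] {f : X → ℝ} {c : ℝ}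
    (hc : 0 ≤ c) (hf : ∀ᵐ x ∂μ, |f x| ≤ c) : √(∫ x, f x ^ 2 ∂μ) ≤ c * √(μ.real univ) := by
  have hsq : ∫ x, f x ^ 2 ∂μ ≤ c ^ 2 * μ.real univ :=
    calc ∫ x, f x ^ 2 ∂μ ≤ ∫ _, c ^ 2 ∂μ :=
          integral_mono_of_nonneg (ae_of_all _ fun x => sq_nonneg _) (integrable_const _)
            (hf.mono fun x hx => sq_le_sq' (neg_le_of_abs_le hx) (le_of_abs_le hx))
      _ = c ^ 2 * μ.real univ := by rw [integral_const, smul_eq_mul, mul_comm]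
  calc √(∫ x, f x ^ 2 ∂μ) ≤ √(c ^ 2 * μ.real univ) := Real.sqrt_le_sqrt hsq
    _ = c * √(μ.real univ) := by rw [Real.sqrt_mul (sq_nonneg c), Real.sqrt_sq hc]

end Measure

theorem exists_mem_Ioc_mul_lt {a ε : ℝ} (ha : 0 ≤ a) (hε : 0 < ε) :
    ∃ t ∈ Ioc (0 : ℝ) 1, t * a < ε := by
  obtain ⟨c, hc, hcε⟩ := exists_pos_mul_lt hε a
  refine ⟨min c 1, ⟨lt_min hc one_pos, min_le_right _ _⟩, ?_⟩
  calc min c 1 * a ≤ c * a := mul_le_mul_of_nonneg_right (min_le_left _ _) ha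
    _ < ε := by rwa [mul_comm]

theorem perturbation_on_zero_velocity_set_general
    {d d' : ℕ}
    (Ω : Set (Fin d → ℝ)) (hΩmeas : MeasurableSet Ω)
    (hΩbdd : Bornology.IsBounded Ω)
    (γ : ℝ)
    (ρ : (Fin d → ℝ) → ℝ) (hρmeas : Measurable ρ)
    (hρ01 : ∀ᵐ x ∂(volume.restrict Ω), ρ x ∈ Set.Icc (0 : ℝ) 1)
    (hρvol : (∫ x in Ω, ρ x) ≤ γ * (volume Ω).toReal)
    (u : (Fin d → ℝ) → EuclideanSpace ℝ (Fin d'))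
    (hu : MemLp u 2 (volume.restrict Ω))
    -- S = {x ∈ Ω : u(x) = 0 and ρ(x) > 0} has positive measure
    (hS : 0 < volume {x ∈ Ω | u x = 0 ∧ 0 < ρ x}) :
    ∀ ε > (0 : ℝ), ∃ η : (Fin d → ℝ) → ℝ,
      -- η ∈ C_γ
      Measurable η ∧
      (∀ᵐ x ∂(volume.restrict Ω), η x ∈ Set.Icc (0 : ℝ) 1) ∧
      (∫ x in Ω, η x) ≤ γ * (volume Ω).toReal ∧
      -- η differs from ρ on a set of positive measure
      0 < volume {x ∈ Ω | η x ≠ ρ x} ∧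
      -- ‖η − ρ‖_{L²(Ω)} < ε
      Real.sqrt (∫ x in Ω, (η x - ρ x) ^ 2) < ε ∧
      -- η = ρ a.e. on Ω \ S
      (∀ᵐ x ∂(volume.restrict (Ω \ {x ∈ Ω | u x = 0 ∧ 0 < ρ x})), η x = ρ x) ∧
      -- α(η)|u|² = α(ρ)|u|² a.e. in Ω, for every function α
      (∀ α : ℝ → ℝ, ∀ᵐ x ∂(volume.restrict Ω),
        α (η x) * ‖u x‖ ^ 2 = α (ρ x) * ‖u x‖ ^ 2) ∧
      -- in particular, the objective value is unchanged for bounded measurable α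
      (∀ α : ℝ → ℝ, Measurable α → (∃ C : ℝ, ∀ y, |α y| ≤ C) →
        (∫ x in Ω, α (η x) * ‖u x‖ ^ 2) = ∫ x in Ω, α (ρ x) * ‖u x‖ ^ 2) := by
  intro ε hε
  have : IsFiniteMeasure (volume.restrict Ω) :=
    isFiniteMeasure_restrict.mpr hΩbdd.measure_lt_top.ne
  have hS_null : NullMeasurableSet {x ∈ Ω | u x = 0 ∧ 0 < ρ x} := by
    rw [sep_and]
    exact (hΩmeas.nullMeasurableSet.sep_eq_zero hu.aestronglyMeasurable).inter
      (hΩmeas.inter (measurableSet_lt measurable_const hρmeas)).nullMeasurableSet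
  obtain ⟨T, hTS, hT, hTS_ae⟩ := hS_null.exists_measurable_subset_ae_eq
  obtain ⟨t, ht, htε⟩ := exists_mem_Ioc_mul_lt (Real.sqrt_nonneg (volume Ω).toReal) hε
  have hρ_int : Integrable ρ (volume.restrict Ω) :=
    .of_bound hρmeas.aestronglyMeasurable 1
      (hρ01.mono fun x hx => (Real.norm_of_nonneg hx.1).trans_le hx.2)
  have hα (α : ℝ → ℝ) (x) : α (shrinkOn T t ρ x) * ‖u x‖ ^ 2 = α (ρ x) * ‖u x‖ ^ 2 :=
    comp_shrinkOn_mul_eq (w := fun x => ‖u x‖ ^ 2) α (fun x hx => by simp [(hTS hx).2.1]) x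
  have hη01 : ∀ᵐ x ∂(volume.restrict Ω), shrinkOn T t ρ x ∈ Icc (0 : ℝ) 1 := by
    filter_upwards [hρ01] with x hx using shrinkOn_mem_Icc ⟨ht.1.le, ht.2⟩ hx
  refine ⟨shrinkOn T t ρ, hρmeas.shrinkOn hT, hη01, ?_, ?_, ?_, ?_,
    fun α => ae_of_all _ (hα α), fun α _ _ => integral_congr_ae (ae_of_all _ (hα α))⟩
  · refine (integral_mono_of_nonneg (hη01.mono fun x hx => hx.1) hρ_int ?_).trans hρvol
    filter_upwards [hρ01] with x hx using shrinkOn_le ht.1.le hx.1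
  · calc 0 < volume {x ∈ Ω | u x = 0 ∧ 0 < ρ x} := hS
      _ = volume T := (measure_congr hTS_ae).symm
      _ ≤ volume {x ∈ Ω | shrinkOn T t ρ x ≠ ρ x} := measure_mono fun x hx =>
          ⟨(hTS hx).1, shrinkOn_ne ht.1.ne' hx (hTS hx).2.2.ne'⟩
  · calc _ ≤ t * √((volume.restrict Ω).real univ) :=
          sqrt_integral_sq_le_mul_sqrt_measureReal ht.1.le
            (hρ01.mono fun x hx => abs_shrinkOn_sub_le ht.1.le hx)
      _ < ε := by rwa [measureReal_restrict_apply_univ]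
  · exact (ae_restrict_mem₀ (hΩmeas.nullMeasurableSet.diff hS_null)).mono
      fun x hx => shrinkOn_of_notMem fun hxT => hx.2 (hTS hxT)

/-- Perturbation construction underlying `supp(ρ) ⊆ supp(u)` for strict minimizers:
if `ρ ∈ C_γ` has positive mass on the set `S = {x ∈ Ω : u(x) = 0, ρ(x) > 0}` where
`u ∈ L²(Ω)^{d'}` vanishes, then for every `ε > 0` there is `η ∈ C_γ` differing from `ρ`
on a set of positive measure, with `‖η − ρ‖_{L²(Ω)} < ε`, `η = ρ` a.e. on `Ω \ S`, and
`α(η)|u|² = α(ρ)|u|²` a.e. in `Ω` for every `α`; in particular the integrals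
`∫_Ω α(η)|u|² dx` and `∫_Ω α(ρ)|u|² dx` coincide for every bounded measurable `α`. -/
theorem perturbation_on_zero_velocity_set
    {d d' : ℕ} (hd : 1 ≤ d) (hd' : 1 ≤ d')
    (Ω : Set (Fin d → ℝ)) (hΩmeas : MeasurableSet Ω)
    (hΩbdd : Bornology.IsBounded Ω) (hΩpos : 0 < volume Ω)
    (γ : ℝ) (hγ : γ ∈ Set.Ioo (0 : ℝ) 1)
    (ρ : (Fin d → ℝ) → ℝ) (hρmeas : Measurable ρ)
    (hρ01 : ∀ᵐ x ∂(volume.restrict Ω), ρ x ∈ Set.Icc (0 : ℝ) 1)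
    (hρvol : (∫ x in Ω, ρ x) ≤ γ * (volume Ω).toReal)
    (u : (Fin d → ℝ) → EuclideanSpace ℝ (Fin d'))
    (hu : MemLp u 2 (volume.restrict Ω))
    -- S = {x ∈ Ω : u(x) = 0 and ρ(x) > 0} has positive measure
    (hS : 0 < volume {x ∈ Ω | u x = 0 ∧ 0 < ρ x}) :
    ∀ ε > (0 : ℝ), ∃ η : (Fin d → ℝ) → ℝ,
      -- η ∈ C_γ
      Measurable η ∧
      (∀ᵐ x ∂(volume.restrict Ω), η x ∈ Set.Icc (0 : ℝ) 1) ∧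
      (∫ x in Ω, η x) ≤ γ * (volume Ω).toReal ∧
      -- η differs from ρ on a set of positive measure
      0 < volume {x ∈ Ω | η x ≠ ρ x} ∧
      -- ‖η − ρ‖_{L²(Ω)} < ε
      Real.sqrt (∫ x in Ω, (η x - ρ x) ^ 2) < ε ∧
      -- η = ρ a.e. on Ω \ S
      (∀ᵐ x ∂(volume.restrict (Ω \ {x ∈ Ω | u x = 0 ∧ 0 < ρ x})), η x = ρ x) ∧
      -- α(η)|u|² = α(ρ)|u|² a.e. in Ω, for every function α
      (∀ α : ℝ → ℝ, ∀ᵐ x ∂(volume.restrict Ω),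
        α (η x) * ‖u x‖ ^ 2 = α (ρ x) * ‖u x‖ ^ 2) ∧
      -- in particular, the objective value is unchanged for bounded measurable α
      (∀ α : ℝ → ℝ, Measurable α → (∃ C : ℝ, ∀ y, |α y| ≤ C) →
        (∫ x in Ω, α (η x) * ‖u x‖ ^ 2) = ∫ x in Ω, α (ρ x) * ‖u x‖ ^ 2) :=
  perturbation_on_zero_velocity_set_general Ω hΩmeas hΩbdd γ ρ hρmeas hρ01 hρvol u hu hS
end
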